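/- For every nonnegative integer n, Σ_{k=0}^{n} C(n,k) · W_k · 3^{n-k} equals C(2n/3, n/3) · C(n, n/3) if 3 divides n, and equals 0 if 3 does not divide n. -/

import Mathlib

/-!
Write `Wcoeff m` for `C(2j,j)·C(3j,j)` when `m = 3j` and `0` when `3 ∤ m`. Then `W` is the
binomial transform `W k = Σ_m C(k,m)·Wcoeff m·(-3)^(k-m)`, and the sum of the theorem is the
binomial transform of `W` with weight `3`. These two transforms are mutually inverse: since
`C(n,k)·C(k,m) = C(n,m)·C(n-m,k-m)`, the binomial theorem gives
`Σ_k C(n,k)·C(k,m)·(-3)^(k-m)·3^(n-k) = C(n,m)·(-3+3)^(n-m)`, which vanishes unless `m = n`.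
Hence the sum equals `Wcoeff n`.
-/

/-- `W n = Σ_{k=0}^{⌊n/3⌋} C(2k,k)·C(3k,k)·C(n,3k)·(-3)^{n-3k}`. -/
def W (n : ℕ) : ℚ :=
  ∑ k ∈ Finset.range (n / 3 + 1),
    (Nat.choose (2 * k) k : ℚ) * (Nat.choose (3 * k) k : ℚ) *
      (Nat.choose n (3 * k) : ℚ) * (-3 : ℚ) ^ (n - 3 * k)

open Finset

section BinomialTransform

variable {R : Type*} [CommRing R]

theorem sum_choose_mul_choose_mul_pow_mul_pow (x y : R) (n m : ℕ) :
    ∑ k ∈ range (n + 1), (n.choose k : R) * k.choose m * x ^ (k - m) * y ^ (n - k)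
      = n.choose m * (x + y) ^ (n - m) := by
  rcases lt_or_ge n m with hnm | hmn
  · rw [Nat.choose_eq_zero_of_lt hnm, Nat.cast_zero, zero_mul]
    refine sum_eq_zero fun k hk ↦ ?_
    rw [Nat.choose_eq_zero_of_lt (show k < m by grind), Nat.cast_zero]
    ring
  obtain ⟨d, rfl⟩ := Nat.exists_eq_add_of_le hmn
  have below_m : ∑ k ∈ range m, ((m + d).choose k : R) * k.choose m * x ^ (k - m) *
      y ^ (m + d - k) = 0 :=
    sum_eq_zero fun k hk ↦ by
      rw [Nat.choose_eq_zero_of_lt (mem_range.1 hk), Nat.cast_zero]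
      ring
  rw [add_assoc, sum_range_add, below_m, zero_add, add_tsub_cancel_left, add_pow, mul_sum]
  refine sum_congr rfl fun i _ ↦ ?_
  have choose_mul := Nat.choose_mul (n := m + d) (by omega : m ≤ m + i)
  rw [add_tsub_cancel_left, add_tsub_cancel_left] at choose_mul
  rw [add_tsub_cancel_left, Nat.add_sub_add_left, mul_comm (x ^ i), ← mul_assoc, ← mul_assoc,
    ← Nat.cast_mul, choose_mul, Nat.cast_mul]
  ring

theorem sum_choose_mul_sum_choose_mul_neg_pow (f : ℕ → R) (x : R) (n : ℕ) :
    ∑ k ∈ range (n + 1),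
        (n.choose k : R) * (∑ m ∈ range (k + 1), (k.choose m : R) * f m * (-x) ^ (k - m)) *
          x ^ (n - k)
      = f n := by
  have extend (k : ℕ) (hk : k ∈ range (n + 1)) :
      ∑ m ∈ range (k + 1), (k.choose m : R) * f m * (-x) ^ (k - m)
        = ∑ m ∈ range (n + 1), (k.choose m : R) * f m * (-x) ^ (k - m) := by
    refine sum_subset (by grind) fun m _ hm ↦ ?_
    rw [Nat.choose_eq_zero_of_lt (show k < m by grind), Nat.cast_zero, zero_mul, zero_mul]
  calc _ = ∑ k ∈ range (n + 1), (n.choose k : R) *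
          (∑ m ∈ range (n + 1), (k.choose m : R) * f m * (-x) ^ (k - m)) * x ^ (n - k) :=
        sum_congr rfl fun k hk ↦ by rw [extend k hk]
    _ = ∑ m ∈ range (n + 1), f m * ∑ k ∈ range (n + 1),
          (n.choose k : R) * k.choose m * (-x) ^ (k - m) * x ^ (n - k) := by
        simp only [mul_sum, sum_mul]
        rw [sum_comm]
        refine sum_congr rfl fun m _ ↦ sum_congr rfl fun k _ ↦ by ring
    _ = ∑ m ∈ range (n + 1), f m * (n.choose m * 0 ^ (n - m)) := by
        simp only [sum_choose_mul_choose_mul_pow_mul_pow, neg_add_cancel]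
    _ = f n := by
        rw [sum_range_succ, sum_eq_zero fun m hm ↦ ?_]
        · simp
        · rw [zero_pow (by grind), mul_zero, mul_zero]

end BinomialTransform

def Wcoeff (m : ℕ) : ℚ :=
  if 3 ∣ m then (Nat.choose (2 * (m / 3)) (m / 3) : ℚ) * (Nat.choose m (m / 3) : ℚ) else 0

theorem W_eq_sum_choose_mul_Wcoeff (k : ℕ) :
    W k = ∑ m ∈ range (k + 1), (k.choose m : ℚ) * Wcoeff m * (-3) ^ (k - m) := by
  have multiples_of_three : (range (k / 3 + 1)).image (3 * ·) ⊆ range (k + 1) := by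
    intro m; grind
  rw [← sum_subset multiples_of_three fun m _ hm ↦ ?_,
    sum_image (mul_right_injective₀ three_ne_zero).injOn]
  · refine sum_congr rfl fun j _ ↦ ?_
    simp only [Wcoeff, dvd_mul_right, if_true, Nat.mul_div_cancel_left _ three_pos]
    ring
  · have : ¬ 3 ∣ m := by
      rintro ⟨j, rfl⟩
      exact hm (mem_image_of_mem _ (by grind))
    simp [Wcoeff, this]

theorem sum_choose_W_three (n : ℕ) :
    ∑ k ∈ Finset.range (n + 1), (Nat.choose n k : ℚ) * W k * 3 ^ (n - k)
      = if 3 ∣ n then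
          (Nat.choose (2 * (n / 3)) (n / 3) : ℚ) * (Nat.choose n (n / 3) : ℚ)
        else 0 := by
  simp only [W_eq_sum_choose_mul_Wcoeff]
  exact sum_choose_mul_sum_choose_mul_neg_pow Wcoeff 3 n
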